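/- Assume S₁ = ∫_{−∞}^0 q(t)/r(t) dt = ∞, q₀ := inf_{x∈ℝ} q(x) > 0, and q(x) → ∞ as |x| → ∞. Then the boundary value problem −r(x)y′(x)+q(x)y(x)=f(x), lim_{|x|→∞} y(x)=0, is correctly solvable in C(ℝ). -/

import Mathlib

/-!
Write `g = q / r` and let `Q` be a primitive of `g`; the equation reads `y' = g y - f / r`, and
variation of constants singles out `y x = exp (Q x) * ∫ t in Ioi x, f t / r t * exp (-Q t)`.
Since `|f| ≤ (sup |f| / q₀) q`, the integrand is dominated by `(sup |f| / q₀) g e^{-Q}`, whose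
integral over `(x, ∞)` is at most `e^{-Q x}`; this gives `|y| ≤ sup |f| / q₀`. The same estimate
with `q → ∞` gives `y → 0` at `+∞`; at `-∞` one also needs `e^{Q x} → 0`, which is `S₁ = ∞`.
For uniqueness, the difference `z` of two solutions satisfies `z' = g z`, so `z e^{-Q}` is constant
and `|z|` is nondecreasing because `g ≥ 0`; hence `z → 0` at `+∞` forces `z = 0`.
Since `g` is only locally integrable, all derivatives are a.e. derivatives of absolutely
continuous functions.
-/

open MeasureTheory Filter Set Real
open scoped ENNReal NNReal

noncomputable section

/-- `y` is a solution of the boundary value problem `-r·y' + q·y = f` on `ℝ` with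
`y → 0` at `±∞`: `y` is continuous, locally absolutely continuous (encoded through the
integral identity, i.e. `y` is the integral of its a.e. derivative `(q·y - f)/r`),
and tends to `0` at both infinities. -/
def IsSolution (r q f y : ℝ → ℝ) : Prop :=
  Continuous y ∧
  (∀ a b : ℝ, y b - y a = ∫ t in a..b, (q t * y t - f t) / r t) ∧
  Tendsto y atBot (nhds 0) ∧ Tendsto y atTop (nhds 0)

/-- Correct solvability of the problem `-r·y' + q·y = f`, `y(±∞) = 0`, in `C(ℝ)`
(bounded continuous functions with the sup-norm): for every bounded continuous `f`
there is a unique solution `y` (such a solution is automatically bounded and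
continuous), and `sup|y| ≤ c·sup|f|` with a constant `c ∈ (0,∞)` independent of `f`. -/
def CorrectlySolvableC (r q : ℝ → ℝ) : Prop :=
  ∃ c : ℝ, 0 < c ∧
    ∀ f : ℝ → ℝ, Continuous f → (∃ M : ℝ, ∀ x, |f x| ≤ M) →
      (∃! y : ℝ → ℝ, IsSolution r q f y) ∧
      ∀ y : ℝ → ℝ, IsSolution r q f y → ∀ x, |y x| ≤ c * ⨆ t, |f t|

/-- `S₁ = ∫_{-∞}^0 q(t)/r(t) dt`, as a (possibly infinite) lower Lebesgue integral. -/
def S1E (r q : ℝ → ℝ) : ℝ≥0∞ :=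
  ∫⁻ t in Set.Iio (0 : ℝ), ENNReal.ofReal (q t / r t)

open scoped Topology

theorem LipschitzOnWith.comp_absolutelyContinuousOnInterval {Y Z : Type*} [PseudoMetricSpace Y]
    [PseudoMetricSpace Z] {φ : Y → Z} {K : ℝ≥0} {s : Set Y} {f : ℝ → Y} {a b : ℝ}
    (hφ : LipschitzOnWith K φ s) (hf : AbsolutelyContinuousOnInterval f a b)
    (hfs : MapsTo f (uIcc a b) s) : AbsolutelyContinuousOnInterval (φ ∘ f) a b := by
  unfold AbsolutelyContinuousOnInterval at hf ⊢
  have hKf := hf.const_mul (K : ℝ)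
  rw [mul_zero] at hKf
  refine squeeze_zero' (Eventually.of_forall fun _ ↦ Finset.sum_nonneg fun _ _ ↦ dist_nonneg) ?_
    hKf
  rw [eventually_inf_principal]
  filter_upwards with E hE
  rw [Finset.mul_sum]
  gcongr with i hi
  exact hφ.dist_le_mul _ (hfs (hE.1 i hi).1) _ (hfs (hE.1 i hi).2)

theorem LocallyLipschitz.comp_absolutelyContinuousOnInterval {Y Z : Type*} [NormedAddCommGroup Y]
    [ProperSpace Y] [PseudoMetricSpace Z] {φ : Y → Z} {f : ℝ → Y} {a b : ℝ}
    (hφ : LocallyLipschitz φ) (hf : AbsolutelyContinuousOnInterval f a b) :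
    AbsolutelyContinuousOnInterval (φ ∘ f) a b := by
  have hcpt : IsCompact (f '' uIcc a b) := isCompact_uIcc.image_of_continuousOn hf.continuousOn
  obtain ⟨K, hK⟩ := hφ.locallyLipschitzOn.exists_lipschitzOnWith_of_compact hcpt
  exact hK.comp_absolutelyContinuousOnInterval hf (mapsTo_image f _)

/-- Meaningful only for locally integrable `φ` (otherwise `∫` returns `0`); the integral clause of
`IsSolution r q f y` is `IsPrimitive y fun t ↦ (q t * y t - f t) / r t` verbatim. -/
def IsPrimitive (u φ : ℝ → ℝ) : Prop :=
  ∀ a b, u b - u a = ∫ t in a..b, φ t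

theorem isPrimitive_integral {φ : ℝ → ℝ} (hφ : LocallyIntegrable φ volume) (c : ℝ) :
    IsPrimitive (fun x ↦ ∫ t in c..x, φ t) φ := fun _ _ ↦
  intervalIntegral.integral_interval_sub_left
    (hφ.integrableOn_isCompact isCompact_uIcc).intervalIntegrable
    (hφ.integrableOn_isCompact isCompact_uIcc).intervalIntegrable

theorem isPrimitive_setIntegral_Ioi {K : ℝ → ℝ} (hK : ∀ x, IntegrableOn K (Ioi x)) :
    IsPrimitive (fun x ↦ ∫ t in Ioi x, K t) (fun t ↦ -K t) := fun a b ↦ by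
  rw [intervalIntegral.integral_neg, ← intervalIntegral.integral_Ioi_sub_Ioi' (hK a) (hK b)]
  ring

namespace IsPrimitive

variable {u v φ ψ : ℝ → ℝ}

theorem congr (h : IsPrimitive u φ) (hφψ : ∀ x, φ x = ψ x) : IsPrimitive u ψ :=
  funext hφψ ▸ h

theorem eq_add_integral (h : IsPrimitive u φ) (c x : ℝ) : u x = u c + ∫ t in c..x, φ t := by
  linarith [h c x]

theorem neg (h : IsPrimitive u φ) : IsPrimitive (fun x ↦ -u x) (fun x ↦ -φ x) := fun a b ↦ by
  rw [intervalIntegral.integral_neg, ← h a b]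
  ring

theorem sub (hu : IsPrimitive u φ) (hv : IsPrimitive v ψ) (hφ : LocallyIntegrable φ volume)
    (hψ : LocallyIntegrable ψ volume) :
    IsPrimitive (fun x ↦ u x - v x) (fun x ↦ φ x - ψ x) := fun a b ↦ by
  rw [intervalIntegral.integral_sub (hφ.integrableOn_isCompact isCompact_uIcc).intervalIntegrable
    (hψ.integrableOn_isCompact isCompact_uIcc).intervalIntegrable, ← hu a b, ← hv a b]
  ring

theorem monotone (h : IsPrimitive u φ) (hφ : ∀ x, 0 ≤ φ x) : Monotone u := fun a b hab ↦ by
  have := h a b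
  have := intervalIntegral.integral_nonneg (μ := volume) hab fun x _ ↦ hφ x
  linarith

theorem apply_eq_apply_of_zero (h : IsPrimitive u 0) (a b : ℝ) : u b = u a := by
  simpa [sub_eq_zero] using h a b

theorem absolutelyContinuousOnInterval (h : IsPrimitive u φ) (hφ : LocallyIntegrable φ volume)
    (a b : ℝ) : AbsolutelyContinuousOnInterval u a b := by
  have hint := (hφ.integrableOn_isCompact isCompact_uIcc).intervalIntegrable
    |>.absolutelyContinuousOnInterval_intervalIntegral (a := a) (b := b) (c := a) left_mem_uIcc
  rw [funext (h.eq_add_integral a)]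
  simpa only [AbsolutelyContinuousOnInterval, dist_add_left] using hint

theorem continuous (h : IsPrimitive u φ) (hφ : LocallyIntegrable φ volume) : Continuous u :=
  continuous_iff_continuousAt.2 fun x ↦
    ((h.absolutelyContinuousOnInterval hφ (x - 1) (x + 1)).continuousOn.continuousAt
      (uIcc_of_le (by linarith : x - 1 ≤ x + 1) ▸ Icc_mem_nhds (by linarith) (by linarith)))

theorem ae_hasDerivAt (h : IsPrimitive u φ) (hφ : LocallyIntegrable φ volume) :
    ∀ᵐ x, HasDerivAt u (φ x) x := by
  filter_upwards [LocallyIntegrable.ae_hasDerivAt_integral hφ] with x hx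
  rw [funext (h.eq_add_integral 0)]
  exact (hx 0).const_add _

theorem of_ae_hasDerivAt (hu : ∀ a b, AbsolutelyContinuousOnInterval u a b)
    (h : ∀ᵐ x, HasDerivAt u (φ x) x) : IsPrimitive u φ := fun a b ↦ by
  rw [← (hu a b).integral_deriv_eq_sub]
  refine intervalIntegral.integral_congr_ae ?_
  filter_upwards [h] with x hx _ using hx.deriv

theorem mul (hu : IsPrimitive u φ) (hv : IsPrimitive v ψ) (hφ : LocallyIntegrable φ volume)
    (hψ : LocallyIntegrable ψ volume) :
    IsPrimitive (fun x ↦ u x * v x) (fun x ↦ φ x * v x + u x * ψ x) := by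
  refine of_ae_hasDerivAt (fun a b ↦ ?_) ?_
  · exact (hu.absolutelyContinuousOnInterval hφ a b).fun_mul
      (hv.absolutelyContinuousOnInterval hψ a b)
  · filter_upwards [hu.ae_hasDerivAt hφ, hv.ae_hasDerivAt hψ] with x hux hvx
    exact hux.mul hvx

theorem exp_comp (h : IsPrimitive u φ) (hφ : LocallyIntegrable φ volume) :
    IsPrimitive (fun x ↦ Real.exp (u x)) (fun x ↦ Real.exp (u x) * φ x) := by
  refine of_ae_hasDerivAt (fun a b ↦ ?_) ?_
  · exact Real.contDiff_exp.locallyLipschitz.comp_absolutelyContinuousOnInterval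
      (h.absolutelyContinuousOnInterval hφ a b)
  · filter_upwards [h.ae_hasDerivAt hφ] with x hx
    exact hx.exp

end IsPrimitive

section ExpWeight

variable {g Q k : ℝ → ℝ}

theorem IsPrimitive.integral_mul_exp_neg (hQ : IsPrimitive Q g) (hg : LocallyIntegrable g volume)
    (a b : ℝ) : ∫ t in a..b, g t * exp (-Q t) = exp (-Q a) - exp (-Q b) := by
  have h := hQ.neg.exp_comp hg.neg a b
  simp only [mul_neg, intervalIntegral.integral_neg] at h
  simp only [mul_comm (g _)]
  linarith

theorem IsPrimitive.integrableOn_Ioi_mul_exp_neg (hQ : IsPrimitive Q g)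
    (hg : LocallyIntegrable g volume) (hg0 : ∀ t, 0 ≤ g t) (x : ℝ) :
    IntegrableOn (fun t ↦ g t * exp (-Q t)) (Ioi x) := by
  refine integrableOn_Ioi_of_intervalIntegral_norm_bounded (exp (-Q x)) x
    (fun b ↦ ((hg.mul_continuous (hQ.continuous hg).neg.rexp).integrableOn_isCompact
      isCompact_Icc).mono_set Ioc_subset_Icc_self) tendsto_id (Eventually.of_forall fun b ↦ ?_)
  simp_rw [Real.norm_of_nonneg (mul_nonneg (hg0 _) (exp_pos _).le)]
  rw [id, hQ.integral_mul_exp_neg hg]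
  linarith [exp_pos (-Q b)]

theorem IsPrimitive.setIntegral_Ioi_mul_exp_neg_le (hQ : IsPrimitive Q g)
    (hg : LocallyIntegrable g volume) (hg0 : ∀ t, 0 ≤ g t) (x : ℝ) :
    ∫ t in Ioi x, g t * exp (-Q t) ≤ exp (-Q x) := by
  refine le_of_tendsto (intervalIntegral_tendsto_integral_Ioi x
    (hQ.integrableOn_Ioi_mul_exp_neg hg hg0 x) tendsto_id) (Eventually.of_forall fun b ↦ ?_)
  rw [id, hQ.integral_mul_exp_neg hg]
  linarith [exp_pos (-Q b)]

theorem IsPrimitive.abs_setIntegral_mul_exp_neg_le (hQ : IsPrimitive Q g)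
    (hg : LocallyIntegrable g volume) (hg0 : ∀ t, 0 ≤ g t) {s : Set ℝ} {x c : ℝ}
    (hs : MeasurableSet s) (hsx : s ⊆ Ioi x) (hc : 0 ≤ c) (hk : ∀ t ∈ s, |k t| ≤ c * g t) :
    |∫ t in s, k t * exp (-Q t)| ≤ c * exp (-Q x) := by
  have hW := hQ.integrableOn_Ioi_mul_exp_neg hg hg0 x
  calc |∫ t in s, k t * exp (-Q t)|
      ≤ ∫ t in s, c * (g t * exp (-Q t)) := by
        rw [← Real.norm_eq_abs]
        refine norm_integral_le_of_norm_le ((hW.mono_set hsx).const_mul c) ?_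
        filter_upwards [ae_restrict_mem hs] with t ht
        rw [Real.norm_eq_abs, abs_mul, abs_of_pos (exp_pos _), ← mul_assoc]
        exact mul_le_mul_of_nonneg_right (hk t ht) (exp_pos _).le
    _ = c * ∫ t in s, g t * exp (-Q t) := integral_const_mul c _
    _ ≤ c * ∫ t in Ioi x, g t * exp (-Q t) := by
        refine mul_le_mul_of_nonneg_left (setIntegral_mono_set hW ?_ hsx.eventuallyLE) hc
        exact Eventually.of_forall fun t ↦ mul_nonneg (hg0 t) (exp_pos _).le
    _ ≤ c * exp (-Q x) :=
        mul_le_mul_of_nonneg_left (hQ.setIntegral_Ioi_mul_exp_neg_le hg hg0 x) hc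

end ExpWeight

def tailSolution (Q k : ℝ → ℝ) (x : ℝ) : ℝ :=
  exp (Q x) * ∫ t in Ioi x, k t * exp (-Q t)

section TailSolution

variable {g Q k : ℝ → ℝ}

theorem abs_tailSolution_le (hQ : IsPrimitive Q g) (hg : LocallyIntegrable g volume)
    (hg0 : ∀ t, 0 ≤ g t) {x c : ℝ} (hc : 0 ≤ c) (hk : ∀ t ∈ Ioi x, |k t| ≤ c * g t) :
    |tailSolution Q k x| ≤ c := by
  rw [tailSolution, abs_mul, abs_of_pos (exp_pos _)]
  calc exp (Q x) * |∫ t in Ioi x, k t * exp (-Q t)|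
      ≤ exp (Q x) * (c * exp (-Q x)) := by
        gcongr
        exact hQ.abs_setIntegral_mul_exp_neg_le hg hg0 measurableSet_Ioi subset_rfl hc hk
    _ = c := by rw [exp_neg]; field_simp

theorem IsPrimitive.integrableOn_Ioi_mul_exp_neg_of_abs_le (hQ : IsPrimitive Q g)
    (hg : LocallyIntegrable g volume) (hg0 : ∀ t, 0 ≤ g t) (hkc : Continuous k) {c : ℝ}
    (hk : ∀ t, |k t| ≤ c * g t) (x : ℝ) : IntegrableOn (fun t ↦ k t * exp (-Q t)) (Ioi x) := by
  refine ((hQ.integrableOn_Ioi_mul_exp_neg hg hg0 x).const_mul c).mono'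
    (hkc.mul (hQ.continuous hg).neg.rexp).aestronglyMeasurable.restrict
    (Eventually.of_forall fun t ↦ ?_)
  rw [Real.norm_eq_abs, abs_mul, abs_of_pos (exp_pos _), ← mul_assoc]
  exact mul_le_mul_of_nonneg_right (hk t) (exp_pos _).le

theorem continuous_tailSolution (hQ : IsPrimitive Q g) (hg : LocallyIntegrable g volume)
    (hg0 : ∀ t, 0 ≤ g t) (hkc : Continuous k) {c : ℝ} (hk : ∀ t, |k t| ≤ c * g t) :
    Continuous (tailSolution Q k) :=
  (hQ.continuous hg).rexp.mul <|
    (isPrimitive_setIntegral_Ioi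
      (hQ.integrableOn_Ioi_mul_exp_neg_of_abs_le hg hg0 hkc hk)).continuous
      (hkc.mul (hQ.continuous hg).neg.rexp).neg.locallyIntegrable

theorem isPrimitive_tailSolution (hQ : IsPrimitive Q g) (hg : LocallyIntegrable g volume)
    (hg0 : ∀ t, 0 ≤ g t) (hkc : Continuous k) {c : ℝ} (hk : ∀ t, |k t| ≤ c * g t) :
    IsPrimitive (tailSolution Q k) (fun t ↦ g t * tailSolution Q k t - k t) := by
  refine ((hQ.exp_comp hg).mul
    (isPrimitive_setIntegral_Ioi (hQ.integrableOn_Ioi_mul_exp_neg_of_abs_le hg hg0 hkc hk))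
    (hg.continuous_mul (hQ.continuous hg).rexp)
    (hkc.mul (hQ.continuous hg).neg.rexp).neg.locallyIntegrable).congr fun t ↦ ?_
  rw [tailSolution, exp_neg]
  field_simp
  ring

theorem tendsto_tailSolution_atTop (hQ : IsPrimitive Q g) (hg : LocallyIntegrable g volume)
    (hg0 : ∀ t, 0 ≤ g t) (hk : k =o[atTop] g) : Tendsto (tailSolution Q k) atTop (𝓝 0) := by
  refine Metric.tendsto_nhds.2 fun ε hε ↦ ?_
  obtain ⟨X, hX⟩ := eventually_atTop.1 (hk.def (half_pos hε))
  filter_upwards [eventually_ge_atTop X] with x hx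
  rw [Real.dist_eq, sub_zero]
  refine (abs_tailSolution_le hQ hg hg0 (half_pos hε).le fun t ht ↦ ?_).trans_lt (half_lt_self hε)
  simpa [abs_of_nonneg (hg0 t)] using hX t (hx.trans (le_of_lt ht))

theorem tendsto_tailSolution_atBot (hQ : IsPrimitive Q g) (hg : LocallyIntegrable g volume)
    (hg0 : ∀ t, 0 ≤ g t) (hQbot : Tendsto Q atBot atBot) (hkc : Continuous k) {c : ℝ}
    (hkg : ∀ t, |k t| ≤ c * g t) (hk : k =o[atBot] g) :
    Tendsto (tailSolution Q k) atBot (𝓝 0) := by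
  have hK := hQ.integrableOn_Ioi_mul_exp_neg_of_abs_le hg hg0 hkc hkg
  refine Metric.tendsto_nhds.2 fun ε hε ↦ ?_
  obtain ⟨A, hA⟩ := eventually_atBot.1 (hk.def (half_pos hε))
  set C := |∫ t in Ioi A, k t * exp (-Q t)|
  have hexpQ : Tendsto (fun x ↦ exp (Q x) * C) atBot (𝓝 0) := by
    simpa using (tendsto_exp_atBot.comp hQbot).mul_const C
  filter_upwards [eventually_le_atBot A, hexpQ.eventually (gt_mem_nhds (half_pos hε))]
    with x hxA hxC
  have hsplit : ∫ t in Ioi x, k t * exp (-Q t)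
      = (∫ t in Ioc x A, k t * exp (-Q t)) + ∫ t in Ioi A, k t * exp (-Q t) := by
    rw [← intervalIntegral.integral_interval_add_Ioi (hK x) (hK A),
      intervalIntegral.integral_of_le hxA]
  have hnear : |∫ t in Ioc x A, k t * exp (-Q t)| ≤ ε / 2 * exp (-Q x) :=
    hQ.abs_setIntegral_mul_exp_neg_le hg hg0 measurableSet_Ioc Ioc_subset_Ioi_self
      (half_pos hε).le fun t ht ↦ by simpa [abs_of_nonneg (hg0 t)] using hA t ht.2
  rw [Real.dist_eq, sub_zero, tailSolution, abs_mul, abs_of_pos (exp_pos _), hsplit]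
  calc exp (Q x) * |(∫ t in Ioc x A, k t * exp (-Q t)) + ∫ t in Ioi A, k t * exp (-Q t)|
      ≤ exp (Q x) * (ε / 2 * exp (-Q x) + C) := by gcongr; exact (abs_add_le _ _).trans (by gcongr)
    _ = ε / 2 + exp (Q x) * C := by rw [exp_neg]; field_simp
    _ < ε := by linarith

end TailSolution

theorem eq_zero_of_isPrimitive_mul_self {g z : ℝ → ℝ} (hg : LocallyIntegrable g volume)
    (hg0 : ∀ t, 0 ≤ g t) (hzc : Continuous z) (hz : IsPrimitive z (fun t ↦ g t * z t))
    (hlim : Tendsto z atTop (𝓝 0)) : z = 0 := by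
  set Q := fun x ↦ ∫ t in (0 : ℝ)..x, g t
  have hQ : IsPrimitive Q g := isPrimitive_integral hg 0
  have hconst : IsPrimitive (fun x ↦ z x * exp (-Q x)) 0 :=
    (hz.mul (hQ.neg.exp_comp hg.neg) (hg.mul_continuous hzc)
      (hg.neg.continuous_mul (hQ.continuous hg).neg.rexp)).congr fun t ↦ by
        simp only [mul_neg, Pi.zero_apply]; ring
  funext a
  have hle : ∀ x ≥ a, |z a| ≤ |z x| := fun x hx ↦ by
    have hw := congrArg abs (hconst.apply_eq_apply_of_zero a x)
    simp only [abs_mul, abs_of_pos (exp_pos _)] at hw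
    have hexp : exp (-Q x) ≤ exp (-Q a) := exp_le_exp.2 (neg_le_neg (hQ.monotone hg0 hx))
    nlinarith [exp_pos (-Q a), abs_nonneg (z x)]
  simpa using ge_of_tendsto hlim.abs (eventually_ge_atTop a |>.mono hle)

theorem IsPrimitive.tendsto_atBot_of_lintegral_eq_top {g Q : ℝ → ℝ} (hQ : IsPrimitive Q g)
    (hg : LocallyIntegrable g volume) (hg0 : ∀ t, 0 ≤ g t)
    (htop : ∫⁻ t in Iio 0, ENNReal.ofReal (g t) = ⊤) : Tendsto Q atBot atBot := by
  refine tendsto_atBot_atBot_of_monotone (hQ.monotone hg0) fun b ↦ ?_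
  by_contra! hb
  have hint : IntegrableOn g (Iic 0) := by
    refine integrableOn_Iic_of_intervalIntegral_norm_bounded (Q 0 - b) 0
      (fun _ ↦ (hg.integrableOn_isCompact isCompact_Icc).mono_set Ioc_subset_Icc_self)
      tendsto_id (Eventually.of_forall fun i ↦ ?_)
    simp_rw [id, Real.norm_of_nonneg (hg0 _)]
    linarith [hQ i 0, hb i]
  exact (hint.mono_set Iio_subset_Iic_self).lintegral_lt_top.ne htop

theorem MeasureTheory.LocallyIntegrable.div_continuous {q r : ℝ → ℝ}
    (hq : LocallyIntegrable q volume) (hr : Continuous r) (hr0 : ∀ x, r x ≠ 0) :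
    LocallyIntegrable (fun t ↦ q t / r t) volume := by
  simpa only [div_eq_mul_inv] using hq.mul_continuous (g := fun x ↦ (r x)⁻¹) (hr.inv₀ hr0)

theorem isLittleO_div_of_tendsto_atTop {f q r : ℝ → ℝ} {l : Filter ℝ} {M : ℝ}
    (hf : ∀ x, |f x| ≤ M) (hq : Tendsto q l atTop) :
    (fun t ↦ f t / r t) =o[l] (fun t ↦ q t / r t) := by
  have hfO : f =O[l] (fun _ ↦ (1 : ℝ)) :=
    Asymptotics.IsBigO.of_bound M (Eventually.of_forall fun x ↦ by simpa using hf x)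
  have hqo : (fun _ ↦ (1 : ℝ)) =o[l] q :=
    (Asymptotics.isLittleO_one_left_iff ℝ).2 (tendsto_norm_atTop_atTop.comp hq)
  simpa only [div_eq_mul_inv] using
    (hfO.trans_isLittleO hqo).mul_isBigO (Asymptotics.isBigO_refl (fun t ↦ (r t)⁻¹) l)

theorem abs_div_le_mul_div {f q r : ℝ → ℝ} (hr : ∀ x, 0 < r x)
    (hf : BddAbove (range fun x ↦ |f x|)) (hq : BddBelow (range q)) (hq0 : 0 < ⨅ x, q x)
    (t : ℝ) : |f t / r t| ≤ (⨅ x, q x)⁻¹ * (⨆ x, |f x|) * (q t / r t) := by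
  have hM : 0 ≤ ⨆ x, |f x| := (abs_nonneg _).trans (le_ciSup hf 0)
  rw [abs_div, abs_of_pos (hr t), mul_div_assoc']
  refine div_le_div_of_nonneg_right ?_ (hr t).le
  calc |f t| ≤ ⨆ x, |f x| := le_ciSup hf t
    _ = (⨅ x, q x)⁻¹ * (⨆ x, |f x|) * ⨅ x, q x := by field_simp
    _ ≤ (⨅ x, q x)⁻¹ * (⨆ x, |f x|) * q t := by gcongr; exact ciInf_le hq t

theorem IsSolution.eq {r q f y₁ y₂ : ℝ → ℝ} (hr : Continuous r) (hrpos : ∀ x, 0 < r x)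
    (hq : LocallyIntegrable q volume) (hqnn : ∀ x, 0 ≤ q x) (hf : Continuous f)
    (h₁ : IsSolution r q f y₁) (h₂ : IsSolution r q f y₂) : y₁ = y₂ := by
  have hr0 : ∀ x, r x ≠ 0 := fun x ↦ (hrpos x).ne'
  have hrhs : ∀ {y}, Continuous y →
      LocallyIntegrable (fun t ↦ (q t * y t - f t) / r t) volume := fun hy ↦
    ((hq.mul_continuous hy).sub hf.locallyIntegrable).div_continuous hr hr0
  have hz : IsPrimitive (fun x ↦ y₁ x - y₂ x) (fun t ↦ q t / r t * (y₁ t - y₂ t)) :=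
    (IsPrimitive.sub h₁.2.1 h₂.2.1 (hrhs h₁.1) (hrhs h₂.1)).congr fun t ↦ by ring
  have h0 := eq_zero_of_isPrimitive_mul_self (z := fun x ↦ y₁ x - y₂ x)
    (hq.div_continuous hr hr0) (fun t ↦ div_nonneg (hqnn t) (hrpos t).le) (h₁.1.sub h₂.1) hz
    (by simpa only [sub_self] using h₁.2.2.2.sub h₂.2.2.2)
  exact funext fun x ↦ sub_eq_zero.1 (congrFun h0 x)

theorem stmt19 (r q : ℝ → ℝ) (hr : Continuous r) (hrpos : ∀ x, 0 < r x)
    (hq : LocallyIntegrable q volume) (hqnn : ∀ x, 0 ≤ q x)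
    (hS1 : S1E r q = ⊤) (hq0 : 0 < ⨅ x, q x)
    (hqtop : Tendsto q atTop atTop) (hqbot : Tendsto q atBot atTop) :
    CorrectlySolvableC r q := by
  have hr0 : ∀ x, r x ≠ 0 := fun x ↦ (hrpos x).ne'
  have hg := hq.div_continuous hr hr0
  have hg0 : ∀ t, 0 ≤ q t / r t := fun t ↦ div_nonneg (hqnn t) (hrpos t).le
  have hQ := isPrimitive_integral hg 0
  have hQbot := hQ.tendsto_atBot_of_lintegral_eq_top hg hg0 hS1
  refine ⟨(⨅ x, q x)⁻¹, inv_pos.2 hq0, fun f hf ⟨M, hM⟩ ↦ ?_⟩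
  have hfbdd : BddAbove (range fun x ↦ |f x|) := ⟨M, by simpa [upperBounds] using hM⟩
  have hc : 0 ≤ (⨅ x, q x)⁻¹ * ⨆ x, |f x| :=
    mul_nonneg (inv_pos.2 hq0).le ((abs_nonneg _).trans (le_ciSup hfbdd 0))
  have hk := abs_div_le_mul_div hrpos hfbdd ⟨0, by simpa [lowerBounds] using hqnn⟩ hq0
  have hkc : Continuous fun t ↦ f t / r t := hf.div hr hr0
  have hprim := isPrimitive_tailSolution hQ hg hg0 hkc hk
  have hsol : IsSolution r q f (tailSolution _ fun t ↦ f t / r t) :=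
    ⟨continuous_tailSolution hQ hg hg0 hkc hk,
      hprim.congr fun t ↦ by ring,
      tendsto_tailSolution_atBot hQ hg hg0 hQbot hkc hk (isLittleO_div_of_tendsto_atTop hM hqbot),
      tendsto_tailSolution_atTop hQ hg hg0 (isLittleO_div_of_tendsto_atTop hM hqtop)⟩
  refine ⟨⟨_, hsol, fun y hy ↦ hy.eq hr hrpos hq hqnn hf hsol⟩, fun y hy x ↦ ?_⟩
  rw [hy.eq hr hrpos hq hqnn hf hsol]
  exact abs_tailSolution_le hQ hg hg0 hc fun t _ ↦ hk t
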